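/- arXiv:2208.11889 — 3 statements merged into one kernel-verified Lean document; each statement's English description precedes it below -/
import Mathlib

section
/- Define g̃ = sl(2|2) ⊕ ℂP ⊕ ℂK as the quotient of centrally extended gl(2|2) by the relation E_{11}+E_{22}−E_{33}−E_{44}=0. The map sending x₁⁺↦E_{21}, x₁⁻↦E_{12}, h₁↦E_{22}−E_{11}, x₂⁺↦−E_{32}, x₂⁻↦E_{23}, h₂↦−E_{33}−E_{22}, x₃⁺↦−E_{43}, x₃⁻↦E_{34}, h₃↦−E_{44}+E_{33}, P⁺↦P, P⁻↦−K, preserves all the Chevalley–Serre-type defining relations of g: [h_i,h_j]=0, [h_i,x_j^±]=±a_{ij}x_j^±, [x_i⁺,x_j⁻]=δ_{ij}h_i, [x₂^±,x₂^±]=[x₁^±,x₃^±]=0, [x_i^±,[x_i^±,x₂^±]]=0 for i=1,3, and [[x₁^±,x₂^±],[x₃^±,x₂^±]]=P₀^±, where the Cartan matrix is a = ((2,−1,0),(−1,0,1),(0,1,−2)) and brackets are super-brackets with x₂^± odd. -/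
open Matrix BigOperators

/-! The bracket `br` is bilinear, and on the basis `E_{ij}` it is given by the structure constants
of the defining formula (`br_Eb_Eb`). Expanding the generators, every relation is therefore a
finite computation with these constants. The central extension is visible only in the last two
relations: e.g. `[x₁⁺, x₂⁺] = E_{31}` and `[x₃⁺, x₂⁺] = E_{42}`, and `[E_{31}, E_{42}]` has no matrix
part but `P`-coefficient `ε̄_{34} ε_{12} = 1`. -/

/-- Carrier of the centrally extended `gl(2|2) ⊕ ℂP ⊕ ℂK` (matrix part, `P`-coefficient,
`K`-coefficient). -/
abbrev GlExt := (Matrix (Fin 4) (Fin 4) ℚ) × ℚ × ℚ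

/-- The `ℤ₂`-grading on indices: `p(1)=p(2)=0`, `p(3)=p(4)=1` (here 0-based). -/
def par (i : Fin 4) : ℕ := if (i : ℕ) < 2 then 0 else 1

/-- `ε`: nonzero only with `ε_{12} = -ε_{21} = 1` (0-based: `ε_{01} = -ε_{10} = 1`). -/
def eps (i j : Fin 4) : ℚ :=
  if i = 0 ∧ j = 1 then 1 else if i = 1 ∧ j = 0 then -1 else 0

/-- `ε̄`: nonzero only with `ε̄_{34} = -ε̄_{43} = 1` (0-based: `ε̄_{23} = -ε̄_{32} = 1`). -/
def epsBar (i j : Fin 4) : ℚ :=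
  if i = 2 ∧ j = 3 then 1 else if i = 3 ∧ j = 2 then -1 else 0

/-- The sign `(-1)^{(p(i)+p(j))(p(k)+p(l))}`. -/
def sgn (i j k l : Fin 4) : ℚ := (-1 : ℚ) ^ ((par i + par j) * (par k + par l))

/-- The bilinear extension of the bracket
`[E_{ij},E_{kl}] = δ_{kj}E_{il} − (−1)^{(p(i)+p(j))(p(k)+p(l))}δ_{il}E_{kj}
  + ε̄_{ik}ε_{jl}P + ε_{ik}ε̄_{jl}K`, with `P`, `K` central. -/
def br (u v : GlExt) : GlExt :=
  ( Matrix.of fun a b =>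
      (∑ j, u.1 a j * v.1 j b) - ∑ i, sgn i b a i * v.1 a i * u.1 i b,
    ∑ i, ∑ j, ∑ k, ∑ l, u.1 i j * v.1 k l * epsBar i k * eps j l,
    ∑ i, ∑ j, ∑ k, ∑ l, u.1 i j * v.1 k l * eps i k * epsBar j l )

/-- The basis element `E_{ij}` (0-based indices). -/
def Eb (i j : Fin 4) : GlExt := (Matrix.single i j 1, 0, 0)

/-- The central element `P`. -/
def Pc : GlExt := (0, 1, 0)

/-- The central element `K`. -/
def Kc : GlExt := (0, 0, 1)

/-- The images of the Chevalley generators `x_i^±`, `h_i` (for the Dynkin diagram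
O-⊗-O), 0-based: `x₁⁺ ↦ E_{21}`, `x₂⁺ ↦ −E_{32}`, `x₃⁺ ↦ −E_{43}`, etc. -/
def xp : Fin 3 → GlExt := ![Eb 1 0, -Eb 2 1, -Eb 3 2]

def xm : Fin 3 → GlExt := ![Eb 0 1, Eb 1 2, Eb 2 3]

def hgen : Fin 3 → GlExt :=
  ![Eb 1 1 - Eb 0 0, -Eb 2 2 - Eb 1 1, -Eb 3 3 + Eb 2 2]

/-- The symmetrized Cartan matrix. -/
def cartanA : Matrix (Fin 3) (Fin 3) ℚ := !![2, -1, 0; -1, 0, 1; 0, 1, -2]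

section Bilinear

variable (u v w : GlExt) (c : ℚ)

@[simp] lemma br_add_left : br (u + v) w = br u w + br v w := by
  ext <;> simp [br, mul_add, add_mul, Finset.sum_add_distrib]; ring

@[simp] lemma br_add_right : br u (v + w) = br u v + br u w := by
  ext <;> simp [br, mul_add, add_mul, Finset.sum_add_distrib]; ring

@[simp] lemma br_smul_left : br (c • u) v = c • br u v := by
  ext <;> simp [br, Finset.mul_sum, mul_sub, mul_assoc, mul_left_comm]

@[simp] lemma br_smul_right : br u (c • v) = c • br u v := by
  ext <;> simp [br, Finset.mul_sum, mul_sub, mul_assoc, mul_left_comm]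

@[simp] lemma br_neg_left : br (-u) v = -br u v := by
  rw [← neg_one_smul ℚ u, br_smul_left, neg_one_smul]

@[simp] lemma br_neg_right : br u (-v) = -br u v := by
  rw [← neg_one_smul ℚ v, br_smul_right, neg_one_smul]

@[simp] lemma br_sub_left : br (u - v) w = br u w - br v w := by
  simp [sub_eq_add_neg]

@[simp] lemma br_sub_right : br u (v - w) = br u v - br u w := by
  simp [sub_eq_add_neg]

@[simp] lemma br_zero_left : br 0 v = 0 := by
  simpa using br_smul_left 0 v 0

@[simp] lemma br_zero_right : br u 0 = 0 := by
  simpa using br_smul_right u 0 0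

end Bilinear

@[simp] lemma br_Eb_Eb (i j k l : Fin 4) :
    br (Eb i j) (Eb k l) =
      (if k = j then Eb i l else 0) - (if i = l then sgn i j k l • Eb k j else 0)
        + (epsBar i k * eps j l) • Pc + (eps i k * epsBar j l) • Kc := by
  ext a b <;>
    simp [br, Eb, Pc, Kc, single_apply, apply_ite Prod.fst, apply_ite Prod.snd, ite_and]
  split_ifs <;> subst_vars <;> simp_all

lemma br_hgen_hgen (i j : Fin 3) : br (hgen i) (hgen j) = 0 := by
  fin_cases i <;> fin_cases j <;>
    simp [hgen, sgn, par, eps, epsBar, neg_one_pow_eq_pow_mod_two]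

lemma br_hgen_xp (i j : Fin 3) : br (hgen i) (xp j) = cartanA i j • xp j := by
  fin_cases i <;> fin_cases j <;>
    simp [hgen, xp, cartanA, sgn, par, eps, epsBar, neg_one_pow_eq_pow_mod_two] <;> module

lemma br_hgen_xm (i j : Fin 3) : br (hgen i) (xm j) = (-(cartanA i j)) • xm j := by
  fin_cases i <;> fin_cases j <;>
    simp [hgen, xm, cartanA, sgn, par, eps, epsBar, neg_one_pow_eq_pow_mod_two] <;> module

lemma br_xp_xm (i j : Fin 3) : br (xp i) (xm j) = if i = j then hgen i else 0 := by
  fin_cases i <;> fin_cases j <;>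
    simp [hgen, xp, xm, sgn, par, eps, epsBar, neg_one_pow_eq_pow_mod_two] <;> module

lemma serre_relations (i : Fin 3) (hi : i = 0 ∨ i = 2) :
    br (xp i) (br (xp i) (xp 1)) = 0 ∧ br (xm i) (br (xm i) (xm 1)) = 0 := by
  rcases hi with rfl | rfl <;> simp [xp, xm, sgn, par, eps, epsBar]

lemma br_br_xp_br_xp_eq_Pc : br (br (xp 0) (xp 1)) (br (xp 2) (xp 1)) = Pc := by
  simp [xp, sgn, par, eps, epsBar]

lemma br_br_xm_br_xm_eq_neg_Kc : br (br (xm 0) (xm 1)) (br (xm 2) (xm 1)) = -Kc := by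
  simp [xm, sgn, par, eps, epsBar]

/-- The map `x₁⁺↦E_{21}`, `x₁⁻↦E_{12}`, `h₁↦E_{22}−E_{11}`, `x₂⁺↦−E_{32}`,
`x₂⁻↦E_{23}`, `h₂↦−E_{33}−E_{22}`, `x₃⁺↦−E_{43}`, `x₃⁻↦E_{34}`, `h₃↦−E_{44}+E_{33}`,
`P⁺↦P`, `P⁻↦−K` preserves all the Chevalley–Serre-type defining relations of the
centrally extended Lie superalgebra `g` (stated in `g̃`, here verified already at the
level of the centrally extended `gl(2|2)`, which maps onto the quotient `g̃`). -/
theorem chevalley_relations_preserved :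
    (∀ i j : Fin 3, br (hgen i) (hgen j) = 0)
    ∧ (∀ i j : Fin 3, br (hgen i) (xp j) = cartanA i j • xp j)
    ∧ (∀ i j : Fin 3, br (hgen i) (xm j) = (-(cartanA i j)) • xm j)
    ∧ (∀ i j : Fin 3, br (xp i) (xm j) = if i = j then hgen i else 0)
    ∧ br (xp 1) (xp 1) = 0 ∧ br (xm 1) (xm 1) = 0
    ∧ br (xp 0) (xp 2) = 0 ∧ br (xm 0) (xm 2) = 0
    ∧ (∀ i : Fin 3, i = 0 ∨ i = 2 →
        br (xp i) (br (xp i) (xp 1)) = 0 ∧ br (xm i) (br (xm i) (xm 1)) = 0)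
    ∧ br (br (xp 0) (xp 1)) (br (xp 2) (xp 1)) = Pc
    ∧ br (br (xm 0) (xm 1)) (br (xm 2) (xm 1)) = -Kc := by
  refine ⟨br_hgen_hgen, br_hgen_xp, br_hgen_xm, br_xp_xm, ?_, ?_, ?_, ?_, serre_relations,
    br_br_xp_br_xp_eq_Pc, br_br_xm_br_xm_eq_neg_Kc⟩ <;>
  simp [xp, xm, eps, epsBar]
end

section
/- The linear map ρ on the centrally extended gl(2|2) defined by ρ(E_{ij}) = E_{5−i,5−j} for 1 ≤ i,j ≤ 4, ρ(P)=K, ρ(K)=P, is a Lie superalgebra automorphism (preserves the super-bracket and the ℤ₂-grading), and satisfies ρ² = id. -/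
open Matrix BigOperators

/-- The map `ρ`: `E_{ij} ↦ E_{5−i,5−j}` (0-based: `i ↦ i.rev = 3−i`), `P ↦ K`, `K ↦ P`. -/
def rho (u : GlExt) : GlExt :=
  (Matrix.of fun a b => u.1 a.rev b.rev, u.2.2, u.2.1)

/-! Reversing the indices, `i ↦ 5 - i`, exchanges the even block `{1,2}` with the odd block `{3,4}`.
Parities `p(i) + p(j)` mod 2 are unchanged, so the super sign of the bracket is preserved, while `ε`
and `ε̄` are exchanged up to a sign each; the two signs cancel in the central terms, which is why `ρ`
must swap `P` and `K`. -/

theorem Fin.sum_univ_four_comp_rev {M : Type*} [AddCommMonoid M] {n : ℕ}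
    (f : Fin n → Fin n → Fin n → Fin n → M) :
    ∑ i : Fin n, ∑ j : Fin n, ∑ k : Fin n, ∑ l : Fin n, f i.rev j.rev k.rev l.rev =
      ∑ i, ∑ j, ∑ k, ∑ l, f i j k l :=
  Fintype.sum_equiv Fin.revPerm _ _ fun _ => Fintype.sum_equiv Fin.revPerm _ _ fun _ =>
    Fintype.sum_equiv Fin.revPerm _ _ fun _ => Fintype.sum_equiv Fin.revPerm _ _ fun _ => rfl

theorem sum_cocycle_comp_rev {R : Type*} [CommRing R] {n : ℕ} (A B : Matrix (Fin n) (Fin n) R)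
    {e f e' f' : Fin n → Fin n → R} (he : ∀ i k, e i.rev k.rev = -e' i k)
    (hf : ∀ j l, f j.rev l.rev = -f' j l) :
    ∑ i, ∑ j, ∑ k, ∑ l, A i j * B k l * e i k * f j l =
      ∑ i, ∑ j, ∑ k, ∑ l, A i.rev j.rev * B k.rev l.rev * e' i k * f' j l := by
  rw [← Fin.sum_univ_four_comp_rev]
  simp only [he, hf, mul_neg, neg_mul, neg_neg]

lemma sgn_rev : ∀ i a b : Fin 4, sgn i b.rev a.rev i = sgn i.rev b a i.rev := by decide

lemma eps_rev : ∀ i k : Fin 4, eps i.rev k.rev = -epsBar i k := by decide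

lemma epsBar_rev : ∀ i k : Fin 4, epsBar i.rev k.rev = -eps i k := by decide

lemma par_rev_add_par_rev_mod_two :
    ∀ i j : Fin 4, (par i.rev + par j.rev) % 2 = (par i + par j) % 2 := by decide

lemma rho_br_fst (u v : GlExt) : (rho (br u v)).1 = (br (rho u) (rho v)).1 := by
  ext a b
  simp only [rho, br, Matrix.of_apply]
  congr 1
  · exact Fintype.sum_equiv Fin.revPerm _ _ fun j => by simp only [Fin.revPerm_apply, Fin.rev_rev]
  · exact Fintype.sum_equiv Fin.revPerm _ _ fun i => by
      simp only [Fin.revPerm_apply, Fin.rev_rev, sgn_rev]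

lemma rho_br (u v : GlExt) : rho (br u v) = br (rho u) (rho v) :=
  Prod.ext (rho_br_fst u v)
    (Prod.ext (sum_cocycle_comp_rev u.1 v.1 eps_rev epsBar_rev)
      (sum_cocycle_comp_rev u.1 v.1 epsBar_rev eps_rev))

lemma rho_rho (u : GlExt) : rho (rho u) = u := by
  ext <;> simp [rho]

lemma rho_Eb (i j : Fin 4) : rho (Eb i j) = Eb i.rev j.rev :=
  Prod.ext (Matrix.submatrix_single_equiv Fin.revPerm Fin.revPerm i j 1) rfl

/-- `ρ` is a Lie superalgebra automorphism of the centrally extended `gl(2|2)`: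
it is linear, preserves the super-bracket and the `ℤ₂`-grading, maps `E_{ij}` to
`E_{5−i,5−j}`, swaps `P` and `K`, and satisfies `ρ² = id`. -/
theorem rho_automorphism :
    (∀ u v : GlExt, rho (u + v) = rho u + rho v)
    ∧ (∀ (c : ℚ) (u : GlExt), rho (c • u) = c • rho u)
    ∧ (∀ u v : GlExt, rho (br u v) = br (rho u) (rho v))
    ∧ (∀ u : GlExt, rho (rho u) = u)
    ∧ (∀ i j : Fin 4, (par i.rev + par j.rev) % 2 = (par i + par j) % 2)
    ∧ (∀ i j : Fin 4, rho (Eb i j) = Eb i.rev j.rev)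
    ∧ rho Pc = Kc ∧ rho Kc = Pc :=
  ⟨fun _ _ => rfl, fun _ _ => rfl, rho_br, rho_rho, par_rev_add_par_rev_mod_two, rho_Eb, rfl, rfl⟩
end

section
/- Let V be a ℚ-vector space and Q : ℕ × ℕ → V a symmetric function (Q(r,s) = Q(s,r)) satisfying: Q(0,0) = 0, Q(1,0) = 0, and for every K ≥ 1, if Q(l, K−l) = 0 for all 0 ≤ l ≤ K, then Q(l+1, K−l) + Q(l, K−l+1) = 0 for all 0 ≤ l ≤ K, and additionally (when K is odd, K = 2m'+1) Q(l+2, 2m'−l) + Q(l, 2m'+2−l) = 0 for all 0 ≤ l ≤ 2m'. Then Q(r,s) = 0 for all r, s ∈ ℕ. -/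
/-- Abstract induction: a symmetric `Q : ℕ × ℕ → V` with `Q(0,0) = Q(1,0) = 0`,
such that vanishing on all of degree `K` forces
`Q(l+1,K−l) + Q(l,K−l+1) = 0` (`0 ≤ l ≤ K`), and vanishing on all of degree `2m`
forces `Q(l+2,2m−l) + Q(l,2m+2−l) = 0` (`0 ≤ l ≤ 2m`), vanishes identically. -/
theorem symmetric_Q_vanishes {V : Type*} [AddCommGroup V] [Module ℚ V]
    (Q : ℕ → ℕ → V)
    (hsym : ∀ r s, Q r s = Q s r)
    (h00 : Q 0 0 = 0) (h10 : Q 1 0 = 0)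
    (hstep : ∀ K : ℕ, 1 ≤ K → (∀ l ≤ K, Q l (K - l) = 0) →
      ∀ l ≤ K, Q (l + 1) (K - l) + Q l (K - l + 1) = 0)
    (hstep2 : ∀ m : ℕ, (∀ l ≤ 2 * m, Q l (2 * m - l) = 0) →
      ∀ l ≤ 2 * m, Q (l + 2) (2 * m - l) + Q l (2 * m + 2 - l) = 0) :
    ∀ r s : ℕ, Q r s = 0 := by
  have half : ∀ v : V, v + v = 0 → v = 0 := by
    intro v h
    have h2 : (2 : ℚ) • v = 0 := by rw [two_smul]; exact h
    rcases smul_eq_zero.mp h2 with h | h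
    · norm_num at h
    · exact h
  have key : ∀ K, ∀ l ≤ K, Q l (K - l) = 0 := by
    intro K
    induction K using Nat.strong_induction_on with
    | _ K ih =>
    match K with
    | 0 => intro l hl; interval_cases l; simpa using h00
    | 1 =>
      intro l hl; interval_cases l
      · rw [hsym]; simpa using h10
      · simpa using h10
    | (K + 2) =>
      have prevK : ∀ l ≤ K, Q l (K - l) = 0 := ih K (by omega)
      have prev : ∀ l ≤ K + 1, Q l (K + 1 - l) = 0 := ih (K + 1) (by omega)
      have step : ∀ l ≤ K + 1, Q (l + 1) (K + 2 - (l + 1)) + Q l (K + 2 - l) = 0 := by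
        intro l hl
        have h := hstep (K + 1) (by omega) prev l hl
        have e1 : K + 2 - (l + 1) = K + 1 - l := by omega
        have e2 : K + 2 - l = K + 1 - l + 1 := by omega
        rw [e1, e2]; exact h
      -- alternating description of degree K+2
      have alt : ∀ j ≤ K + 2, Q j (K + 2 - j) = ((-1 : ℚ) ^ j) • Q 0 (K + 2) := by
        intro j
        induction j with
        | zero => intro _; simp
        | succ j ihj =>
          intro hj
          have hj' : j ≤ K + 1 := by omega
          have hs := step j hj'
          have hQ : Q (j + 1) (K + 2 - (j + 1)) = -Q j (K + 2 - j) :=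
            eq_neg_of_add_eq_zero_left hs
          rw [hQ, ihj (by omega), pow_succ]
          rw [mul_comm, mul_smul]
          simp
      have g0 : Q 0 (K + 2) = 0 := by
        rcases Nat.even_or_odd K with hK | hK
        · -- K even : use hstep2
          obtain ⟨m, hm⟩ := hK
          have hv : ∀ l ≤ 2 * m, Q l (2 * m - l) = 0 := by
            intro l hl
            have e : 2 * m - l = K - l := by omega
            rw [e]; exact prevK l (by omega)
          have h2 := hstep2 m hv 0 (by omega)
          have h2' : Q 2 K + Q 0 (K + 2) = 0 := by
            have e1 : 2 * m - 0 = K := by omega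
            have e2 : 2 * m + 2 - 0 = K + 2 := by omega
            rw [e1, e2] at h2
            simpa using h2
          have hQ2 : Q 2 K = Q 0 (K + 2) := by
            have := alt 2 (by omega)
            simpa [show K + 2 - 2 = K from by omega] using this
          rw [hQ2] at h2'
          exact half _ h2'
        · -- K odd : K + 2 odd, symmetry forces vanishing
          have hodd : Odd (K + 2) := by
            rw [Nat.odd_iff] at hK ⊢; omega
          have htop := alt (K + 2) le_rfl
          rw [Nat.sub_self, hsym, Odd.neg_one_pow hodd, neg_smul, one_smul] at htop
          exact half _ (by rw [← neg_eq_iff_add_eq_zero]; exact htop.symm)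
      intro l hl
      rw [alt l hl, g0, smul_zero]
  intro r s
  have h := key (r + s) r (Nat.le_add_right r s)
  simpa [Nat.add_sub_cancel_left] using h
end
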